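/- Fix n ≥ 2 and r > 0, and let S₀ ⊆ ℝⁿ be the regular simplex with inscribed ball B(0,r). Suppose that for every monotone decreasing positive function ρ : [0,∞) → (0,∞) with ∫_{ℝⁿ} ρ(‖x‖) dx < ∞ (with associated measure μ_ρ of density ρ(‖x‖)) and every simplex S containing B(0,r) that is a local minimizer of S ↦ μ_ρ(S) among simplices containing B(0,r) (local with respect to the Hausdorff distance), one has μ_ρ(S) ≥ μ_ρ(S₀). Then for every such ρ and every simplex S containing B(0,r), μ_ρ(S) ≥ μ_ρ(S₀). -/

import Mathlib

/-!
Perturb `ρ` by adding a small constant `c` on a large ball. For the perturbed measure `μ`, the map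
`u ↦ μ {x | ∀ i, ⟪x, u i⟫ ≤ r}` on `(n+1)`-tuples of unit vectors is lower semicontinuous
(hyperplanes are null), so it attains its minimum on this compact set. If the minimizing normals
lie in a closed half-space, the body is unbounded and contains a long row of disjoint `r`-balls,
which the perturbation makes heavier than `S`. Otherwise the body is a simplex, and since every
simplex containing `B(0,r)` contains such a body, it minimizes `μ` among all of them. The hypothesis
compares it with `S₀`, and letting `c → 0` gives the claim.
-/

open MeasureTheory Real
open scoped InnerProductSpace ENNReal

/-- A simplex in `ℝⁿ`: the convex hull of `n+1` affinely independent points. -/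
def IsSimplex {n : ℕ} (S : Set (EuclideanSpace ℝ (Fin n))) : Prop :=
  ∃ p : Fin (n + 1) → EuclideanSpace ℝ (Fin n),
    AffineIndependent ℝ p ∧ S = convexHull ℝ (Set.range p)

/-- A regular simplex with inscribed ball `B(0,r)`:
`{x : ⟪x,u_i⟫ ≤ r, i = 1,…,n+1}` for unit vectors `u_i` with `⟪u_i,u_j⟫ = −1/n` (i ≠ j). -/
def IsRegularOutSimplex (n : ℕ) (r : ℝ) (S : Set (EuclideanSpace ℝ (Fin n))) : Prop :=
  ∃ u : Fin (n + 1) → EuclideanSpace ℝ (Fin n),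
    (∀ i, ‖u i‖ = 1) ∧ (∀ i j, i ≠ j → ⟪u i, u j⟫_ℝ = -1 / n) ∧
    S = {x | ∀ i, ⟪x, u i⟫_ℝ ≤ r}

/-- The measure on `ℝⁿ` with radial density `ρ(‖x‖)` w.r.t. Lebesgue measure. -/
noncomputable def muRad (n : ℕ) (ρ : ℝ → ℝ) : Measure (EuclideanSpace ℝ (Fin n)) :=
  volume.withDensity fun x => ENNReal.ofReal (ρ ‖x‖)

open Metric Set Filter
open scoped Topology

lemma le_of_forall_pos_le_add_ofReal_mul {a b V : ℝ≥0∞} (hV : V ≠ ⊤)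
    (h : ∀ c : ℝ, 0 < c → a ≤ b + ENNReal.ofReal c * V) : a ≤ b := by
  have h0 : Tendsto ENNReal.ofReal (𝓝[>] 0) (𝓝 0) := by
    simpa using (ENNReal.continuous_ofReal.tendsto 0).mono_left nhdsWithin_le_nhds
  have hlim : Tendsto (fun c : ℝ => b + ENNReal.ofReal c * V) (𝓝[>] 0) (𝓝 b) := by
    simpa using tendsto_const_nhds.add (ENNReal.Tendsto.mul_const h0 (Or.inr hV))
  exact ge_of_tendsto hlim (eventually_nhdsWithin_of_forall h)

section InnerProductSpace

variable {ι E : Type*} [NormedAddCommGroup E] [InnerProductSpace ℝ E]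

def tangentBody (r : ℝ) (u : ι → E) : Set E := {x | ∀ i, ⟪x, u i⟫_ℝ ≤ r}

/-- The dual form of: the `u i` generate `E` as a convex cone. -/
def PositivelySpanning (u : ι → E) : Prop := ∀ w, w ≠ 0 → ∃ i, 0 < ⟪u i, w⟫_ℝ

lemma closedBall_subset_tangentBody {r : ℝ} {u : ι → E} (hu : ∀ i, ‖u i‖ = 1) :
    closedBall 0 r ⊆ tangentBody r u := fun x hx i =>
  calc ⟪x, u i⟫_ℝ ≤ ‖x‖ * ‖u i‖ := real_inner_le_norm _ _
    _ ≤ r := by rw [hu i, mul_one]; exact mem_closedBall_zero_iff.1 hx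

lemma ball_smul_subset_tangentBody {r t : ℝ} {u : ι → E} {w : E} (hu : ∀ i, ‖u i‖ = 1)
    (hw : ∀ i, ⟪u i, w⟫_ℝ ≤ 0) (ht : 0 ≤ t) : ball (t • w) r ⊆ tangentBody r u := by
  intro x hx i
  have hsplit : ⟪x, u i⟫_ℝ = ⟪x - t • w, u i⟫_ℝ + t * ⟪u i, w⟫_ℝ := by
    rw [inner_sub_left, real_inner_smul_left, real_inner_comm w]; ring
  have hnear : ⟪x - t • w, u i⟫_ℝ ≤ ‖x - t • w‖ :=
    (real_inner_le_norm _ _).trans_eq (by rw [hu i, mul_one])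
  have hfar : t * ⟪u i, w⟫_ℝ ≤ 0 := mul_nonpos_of_nonneg_of_nonpos ht (hw i)
  rw [mem_ball, dist_eq_norm] at hx
  show ⟪x, u i⟫_ℝ ≤ r
  linarith

lemma convex_tangentBody (r : ℝ) (u : ι → E) : Convex ℝ (tangentBody r u) := by
  intro x hx y hy a b ha hb hab i
  calc ⟪a • x + b • y, u i⟫_ℝ = a * ⟪x, u i⟫_ℝ + b * ⟪y, u i⟫_ℝ := by
        rw [inner_add_left, real_inner_smul_left, real_inner_smul_left]
    _ ≤ a * r + b * r := by gcongr <;> [exact hx i; exact hy i]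
    _ = r := by rw [← add_mul, hab, one_mul]

lemma exists_unit_halfspace_subset [FiniteDimensional ℝ E] [Nontrivial E] {r : ℝ} (hr : 0 ≤ r)
    (f : E →ᵃ[ℝ] ℝ) (hf : ∀ x ∈ closedBall (0 : E) r, 0 ≤ f x) :
    ∃ u : E, ‖u‖ = 1 ∧ ∀ x, ⟪x, u⟫_ℝ ≤ r → 0 ≤ f x := by
  set v := (InnerProductSpace.toDual ℝ E).symm (LinearMap.toContinuousLinearMap f.linear)
  have hfv : ∀ x, f x = ⟪v, x⟫_ℝ + f 0 := fun x => by
    conv_lhs => rw [f.decomp]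
    simp [v, InnerProductSpace.toDual_symm_apply]
  rcases eq_or_ne v 0 with hv | hv
  · obtain ⟨u, hu⟩ := exists_norm_eq E zero_le_one
    refine ⟨u, hu, fun x _ => ?_⟩
    rw [hfv, hv, inner_zero_left, zero_add]
    exact hf 0 (mem_closedBall_self hr)
  · set u := -(‖v‖⁻¹ • v)
    have hu : ‖u‖ = 1 := by rw [norm_neg, norm_smul, norm_inv, norm_norm,
      inv_mul_cancel₀ (norm_ne_zero_iff.2 hv)]
    have hvx : ∀ x, ⟪v, x⟫_ℝ = -‖v‖ * ⟪x, u⟫_ℝ := fun x => by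
      rw [inner_neg_right, real_inner_smul_right, real_inner_comm]
      field_simp
    have hru : 0 ≤ f (r • u) := hf _ (by simp [norm_smul, hu, abs_of_nonneg hr])
    have hru' : ⟪r • u, u⟫_ℝ = r := by
      rw [real_inner_smul_left, real_inner_self_eq_norm_sq, hu, one_pow, mul_one]
    refine ⟨u, hu, fun x hx => ?_⟩
    rw [hfv, hvx, hru'] at hru
    rw [hfv, hvx]
    nlinarith [norm_nonneg v]

lemma AffineBasis.exists_tangentBody_subset_convexHull [FiniteDimensional ℝ E] [Nontrivial E]
    {r : ℝ} (hr : 0 ≤ r) (b : AffineBasis ι ℝ E) (hball : closedBall 0 r ⊆ convexHull ℝ (range b)) :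
    ∃ u : ι → E, (∀ i, ‖u i‖ = 1) ∧ tangentBody r u ⊆ convexHull ℝ (range b) := by
  rw [b.convexHull_eq_nonneg_coord] at hball ⊢
  choose u hu hsub using fun i =>
    exists_unit_halfspace_subset hr (b.coord i) fun x hx => hball hx i
  exact ⟨u, hu, fun x hx i => hsub i x (hx i)⟩

lemma PositivelySpanning.eq_zero_of_inner_eq_zero {u : ι → E} (hu : PositivelySpanning u)
    (i : ι) {w : E} (hw : ∀ j, j ≠ i → ⟪u j, w⟫_ℝ = 0) : w = 0 := by
  by_contra hw0
  obtain ⟨k, hk⟩ := hu w hw0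
  obtain ⟨m, hm⟩ := hu (-w) (neg_ne_zero.2 hw0)
  rw [inner_neg_right, neg_pos] at hm
  have hki : k = i := by_contra fun hki => hk.ne' (hw k hki)
  have hmi : m = i := by_contra fun hmi => hm.ne (hw m hmi)
  subst hki hmi
  linarith

lemma PositivelySpanning.exists_inner_eq [Fintype ι] [DecidableEq ι] [FiniteDimensional ℝ E]
    {u : ι → E} (hu : PositivelySpanning u) (hcard : Fintype.card ι = Module.finrank ℝ E + 1)
    (i : ι) (y : ι → ℝ) : ∃ w : E, ∀ j, j ≠ i → ⟪u j, w⟫_ℝ = y j := by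
  let Φ : E →ₗ[ℝ] ({j // j ≠ i} → ℝ) := LinearMap.pi fun j => innerₛₗ ℝ (u j)
  have hinj : Function.Injective Φ := by
    rw [← LinearMap.ker_eq_bot, LinearMap.ker_eq_bot']
    exact fun w hw => hu.eq_zero_of_inner_eq_zero i fun j hj => congrFun hw ⟨j, hj⟩
  have hdim : Module.finrank ℝ E = Module.finrank ℝ ({j // j ≠ i} → ℝ) := by
    rw [Module.finrank_fintype_fun_eq_card, Fintype.card_subtype_compl, Fintype.card_subtype_eq]
    omega
  obtain ⟨w, hw⟩ := (LinearMap.injective_iff_surjective_of_finrank_eq_finrank hdim).1 hinj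
    fun j => y j
  exact ⟨w, fun j hj => congrFun hw ⟨j, hj⟩⟩

lemma PositivelySpanning.exists_pos_sum_smul_eq_zero [Fintype ι] [DecidableEq ι]
    [FiniteDimensional ℝ E] {u : ι → E} (hu : PositivelySpanning u)
    (hcard : Fintype.card ι = Module.finrank ℝ E + 1) :
    ∃ l : ι → ℝ, (∀ i, 0 < l i) ∧ ∑ i, l i • u i = 0 := by
  -- Gordan: otherwise a hyperplane would separate `0` from the convex hull of the `u i`
  obtain ⟨l, hl, hlu⟩ : ∃ l ∈ stdSimplex ℝ ι, ∑ i, l i • u i = 0 := by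
    by_contra! h
    let L := Fintype.linearCombination ℝ u
    have h0 : (0 : E) ∉ L '' stdSimplex ℝ ι := by
      rintro ⟨l, hl, hl0⟩
      exact h l hl (by simpa [L, Fintype.linearCombination_apply] using hl0)
    obtain ⟨f, s, hf0, hfs⟩ := geometric_hahn_banach_point_closed
      ((convex_stdSimplex ℝ ι).linear_image L)
      ((isCompact_stdSimplex ℝ ι).image L.continuous_of_finiteDimensional).isClosed h0
    have hfu : ∀ i, s < f (u i) := fun i =>
      hfs _ ⟨Pi.single i 1, single_mem_stdSimplex ℝ i, by simp [L]⟩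
    obtain ⟨i₀⟩ : Nonempty ι := Fintype.card_pos_iff.1 (by omega)
    set w := (InnerProductSpace.toDual ℝ E).symm f
    have hw : w ≠ 0 := by
      intro hw
      have hf : f = 0 := by simpa [w] using hw
      have := hfu i₀
      simp only [hf, zero_apply] at this hf0
      linarith
    obtain ⟨i, hi⟩ := hu (-w) (neg_ne_zero.2 hw)
    rw [inner_neg_right, real_inner_comm, InnerProductSpace.toDual_symm_apply, neg_pos] at hi
    rw [map_zero] at hf0
    linarith [hfu i]
  -- a weight `l k = 0` is refuted by pairing with `w` such that `⟪u j, w⟫ = 1` for all `j ≠ k`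
  refine ⟨l, fun k => (hl.1 k).lt_of_ne' fun hk => ?_, hlu⟩
  obtain ⟨w, hw⟩ := hu.exists_inner_eq hcard k 1
  have hsum : ∑ j, l j * ⟪u j, w⟫_ℝ = ∑ j, l j := Finset.sum_congr rfl fun j _ => by
    by_cases hj : j = k
    · simp [hj, hk]
    · rw [hw j hj, Pi.one_apply, mul_one]
  have hzero : ∑ j, l j * ⟪u j, w⟫_ℝ = 0 := by
    simpa [sum_inner, real_inner_smul_left] using congrArg (⟪·, w⟫_ℝ) hlu
  linarith [hl.2]

end InnerProductSpace

section Vertices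

variable {ι E : Type*} [NormedAddCommGroup E] [InnerProductSpace ℝ E] [Fintype ι] [DecidableEq ι]
  {u : ι → E} {l : ι → ℝ} {p : ι → E} {r : ℝ}

lemma inner_vertex (hl : ∀ i, l i ≠ 0) (hlu : ∑ i, l i • u i = 0)
    (hp : ∀ i j, j ≠ i → ⟪u j, p i⟫_ℝ = r) (i k : ι) :
    ⟪u k, p i⟫_ℝ = r - if i = k then r * (∑ j, l j) / l k else 0 := by
  by_cases hik : i = k
  · subst hik
    have hone : ∑ j, l j * (⟪u j, p i⟫_ℝ - r) = l i * (⟪u i, p i⟫_ℝ - r) :=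
      Finset.sum_eq_single i (fun j _ hj => by rw [hp i j hj, sub_self, mul_zero]) (by simp)
    have hzero : ∑ j, l j * ⟪u j, p i⟫_ℝ = 0 := by
      simpa [sum_inner, real_inner_smul_left] using congrArg (⟪·, p i⟫_ℝ) hlu
    simp only [mul_sub, Finset.sum_sub_distrib, ← Finset.sum_mul, hzero] at hone
    rw [if_pos rfl]
    field_simp [hl i]
    linarith
  · rw [if_neg hik, sub_zero, hp i k (Ne.symm hik)]

lemma inner_sum_smul_vertex (hl : ∀ i, l i ≠ 0) (hlu : ∑ i, l i • u i = 0)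
    (hp : ∀ i j, j ≠ i → ⟪u j, p i⟫_ℝ = r) (w : ι → ℝ) (k : ι) :
    ⟪u k, ∑ i, w i • p i⟫_ℝ = (∑ i, w i) * r - w k * (r * (∑ j, l j) / l k) := by
  simp [inner_sum, real_inner_smul_right, inner_vertex hl hlu hp, mul_sub,
    Finset.sum_sub_distrib, ← Finset.sum_mul]

end Vertices

lemma PositivelySpanning.isSimplex_tangentBody {n : ℕ} {r : ℝ} (hr : 0 < r)
    {u : Fin (n + 1) → EuclideanSpace ℝ (Fin n)} (hu : PositivelySpanning u) :
    IsSimplex (tangentBody r u) := by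
  have hcard : Fintype.card (Fin (n + 1)) = Module.finrank ℝ (EuclideanSpace ℝ (Fin n)) + 1 := by
    simp
  obtain ⟨l, hl, hlu⟩ := hu.exists_pos_sum_smul_eq_zero hcard
  choose p hp using fun i => hu.exists_inner_eq hcard i fun _ => r
  have hl0 : ∀ i, l i ≠ 0 := fun i => (hl i).ne'
  have hsum : 0 < r * ∑ j, l j := mul_pos hr (Finset.sum_pos (fun j _ => hl j) Finset.univ_nonempty)
  have hd : ∀ k, 0 < r * (∑ j, l j) / l k := fun k => div_pos hsum (hl k)
  have hkey := inner_sum_smul_vertex hl0 hlu hp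
  refine ⟨p, ?_, subset_antisymm ?_ ?_⟩
  · rw [affineIndependent_iff_of_fintype]
    intro w hw0 hw i
    have hi := hkey w i
    rw [Finset.weightedVSub_eq_linear_combination _ hw0] at hw
    rw [hw, inner_zero_right, hw0, zero_mul, zero_sub, zero_eq_neg] at hi
    exact (mul_eq_zero.1 hi).resolve_right (hd i).ne'
  · intro x hx
    -- the barycentric coordinates of `x` with respect to `p`
    set g := fun i => (r - ⟪u i, x⟫_ℝ) / (r * (∑ j, l j) / l i)
    have hg : ∀ i, 0 ≤ g i := fun i =>
      div_nonneg (by rw [real_inner_comm]; linarith [hx i]) (hd i).le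
    have hg1 : ∑ i, g i = 1 := by
      have hgi : ∀ i, g i = (l i * r - ⟪l i • u i, x⟫_ℝ) / (r * ∑ j, l j) := fun i => by
        simp only [g, real_inner_smul_left]
        field_simp [hl0 i]
      rw [Finset.sum_congr rfl fun i _ => hgi i, ← Finset.sum_div, Finset.sum_sub_distrib,
        ← sum_inner, hlu, inner_zero_left, sub_zero, ← Finset.sum_mul, mul_comm,
        div_self hsum.ne']
    have hx' : ∑ i, g i • p i = x := by
      rw [← sub_eq_zero]
      refine hu.eq_zero_of_inner_eq_zero 0 fun k _ => ?_
      rw [inner_sub_right, hkey, hg1]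
      simp only [g, one_mul, div_mul_cancel₀ _ (hd k).ne']
      ring
    rw [← hx']
    exact (convex_convexHull ℝ _).sum_mem (fun i _ => hg i) hg1
      fun i _ => subset_convexHull ℝ _ (mem_range_self i)
  · refine convexHull_min ?_ (convex_tangentBody r u)
    rintro _ ⟨i, rfl⟩ k
    rw [real_inner_comm, inner_vertex hl0 hlu hp]
    split_ifs
    · linarith [hd k]
    · linarith

section Measure

variable {ι E : Type*} [NormedAddCommGroup E] [InnerProductSpace ℝ E] [MeasurableSpace E]

lemma measure_hyperplane_eq_zero [BorelSpace E] [FiniteDimensional ℝ E] (μ : Measure E)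
    [μ.IsAddHaarMeasure] {u : E} (hu : u ≠ 0) (r : ℝ) : μ {x | ⟪x, u⟫_ℝ = r} = 0 := by
  have hsub : {x | ⟪x, u⟫_ℝ = r} ⊆ AffineSubspace.mk' ((r / ‖u‖ ^ 2) • u) (ℝ ∙ u)ᗮ := by
    intro x (hx : ⟪x, u⟫_ℝ = r)
    rw [SetLike.mem_coe, AffineSubspace.mem_mk', vsub_eq_sub,
      Submodule.mem_orthogonal_singleton_iff_inner_right, inner_sub_right, real_inner_comm,
      hx, real_inner_smul_right, real_inner_self_eq_norm_sq]
    field_simp [norm_ne_zero_iff.2 hu]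
    ring
  refine measure_mono_null hsub (Measure.addHaar_affineSubspace μ _ fun htop => hu ?_)
  have hdir := congrArg AffineSubspace.direction htop
  rw [AffineSubspace.direction_mk', AffineSubspace.direction_top] at hdir
  have hmem : u ∈ (ℝ ∙ u)ᗮ := hdir ▸ Submodule.mem_top
  rwa [Submodule.mem_orthogonal_singleton_iff_inner_right, inner_self_eq_zero] at hmem

lemma measure_tangentBody_le_strict [Countable ι] (μ : Measure E) {r : ℝ} {a : ι → E}
    (hnull : ∀ i, μ {x | ⟪x, a i⟫_ℝ = r} = 0) :
    μ (tangentBody r a) ≤ μ {x | ∀ i, ⟪x, a i⟫_ℝ < r} :=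
  calc μ (tangentBody r a)
      ≤ μ ({x | ∀ i, ⟪x, a i⟫_ℝ < r} ∪ ⋃ i, {x | ⟪x, a i⟫_ℝ = r}) := by
        refine measure_mono fun x hx => ?_
        by_cases h : ∀ i, ⟪x, a i⟫_ℝ < r
        · exact Or.inl h
        · obtain ⟨i, hi⟩ := not_forall.1 h
          exact Or.inr (mem_iUnion.2 ⟨i, le_antisymm (hx i) (not_lt.1 hi)⟩)
    _ ≤ μ {x | ∀ i, ⟪x, a i⟫_ℝ < r} + μ (⋃ i, {x | ⟪x, a i⟫_ℝ = r}) := measure_union_le _ _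
    _ = μ {x | ∀ i, ⟪x, a i⟫_ℝ < r} := by rw [measure_iUnion_null hnull, add_zero]

lemma lowerSemicontinuousAt_measure_tangentBody [Finite ι]
    (μ : Measure E) [μ.Regular] {r : ℝ} {a : ι → E} (hnull : ∀ i, μ {x | ⟪x, a i⟫_ℝ = r} = 0) :
    LowerSemicontinuousAt (fun u : ι → E => μ (tangentBody r u)) a := by
  intro y hy
  have hopen : IsOpen {z : (ι → E) × E | ∀ i, ⟪z.2, z.1 i⟫_ℝ < r} := by
    simp only [ofPred_forall]
    exact isOpen_iInter_of_finite fun i =>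
      isOpen_lt (continuous_snd.inner ((continuous_apply i).comp continuous_fst)) continuous_const
  obtain ⟨K, hKU, hK, hyK⟩ := (hopen.preimage (Continuous.prodMk_right a)).exists_lt_isCompact
    (hy.trans_le (measure_tangentBody_le_strict μ hnull))
  have hev : ∀ᶠ v in 𝓝 a, ∀ x ∈ K, ∀ i, ⟪x, v i⟫_ℝ < r :=
    hK.eventually_forall_of_forall_eventually fun x hx => hopen.mem_nhds (hKU hx)
  filter_upwards [hev] with v hv
  exact hyK.trans_le (measure_mono fun x hx i => (hv x hx i).le)

lemma exists_isMinOn_measure_tangentBody [Finite ι] [FiniteDimensional ℝ E] [Nontrivial E]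
    (μ : Measure E) [μ.Regular] {r : ℝ}
    (hnull : ∀ u : E, ‖u‖ = 1 → μ {x | ⟪x, u⟫_ℝ = r} = 0) :
    ∃ a : ι → E, (∀ i, ‖a i‖ = 1) ∧
      ∀ v : ι → E, (∀ i, ‖v i‖ = 1) → μ (tangentBody r a) ≤ μ (tangentBody r v) := by
  have hmem : ∀ v : ι → E, v ∈ univ.pi (fun _ => sphere (0 : E) 1) ↔ ∀ i, ‖v i‖ = 1 := by
    simp
  obtain ⟨e, he⟩ := exists_norm_eq E zero_le_one
  obtain ⟨a, ha, hmin⟩ := LowerSemicontinuousOn.exists_isMinOn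
    ⟨fun _ => e, (hmem _).2 fun _ => he⟩ (isCompact_univ_pi fun _ => isCompact_sphere 0 1)
    fun a ha => (lowerSemicontinuousAt_measure_tangentBody μ
      fun i => hnull (a i) ((hmem a).1 ha i)).lowerSemicontinuousWithinAt _
  exact ⟨a, (hmem a).1 ha, fun v hv => hmin ((hmem v).2 hv)⟩

lemma nat_mul_le_measure_tangentBody [OpensMeasurableSpace E] {r : ℝ} (hr : 0 < r) {u : ι → E}
    (hu : ∀ i, ‖u i‖ = 1) (hspan : ¬PositivelySpanning u) (ν : Measure E) {m : ℝ≥0∞} (K : ℕ)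
    (hν : ∀ x : E, ‖x‖ ≤ 2 * r * K → m ≤ ν (ball x r)) : K * m ≤ ν (tangentBody r u) := by
  obtain ⟨w, hw0, hw⟩ : ∃ w : E, w ≠ 0 ∧ ∀ i, ⟪u i, w⟫_ℝ ≤ 0 := by
    simpa [PositivelySpanning] using hspan
  set e := ‖w‖⁻¹ • w
  have he : ‖e‖ = 1 := by
    rw [norm_smul, norm_inv, norm_norm, inv_mul_cancel₀ (norm_ne_zero_iff.2 hw0)]
  have hue : ∀ i, ⟪u i, e⟫_ℝ ≤ 0 := fun i => by
    rw [real_inner_smul_right]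
    exact mul_nonpos_of_nonneg_of_nonpos (by positivity) (hw i)
  have hdisj : (↑(Finset.range K) : Set ℕ).PairwiseDisjoint fun k => ball ((2 * r * k) • e) r := by
    intro k _ j _ hkj
    refine ball_disjoint_ball ?_
    have hkj' : (1 : ℝ) ≤ |(k : ℝ) - j| := by
      exact_mod_cast Int.one_le_abs (sub_ne_zero.2 (by exact_mod_cast hkj : (k : ℤ) ≠ j))
    rw [dist_eq_norm, ← sub_smul, norm_smul, he, mul_one, ← mul_sub, Real.norm_eq_abs, abs_mul,
      abs_of_pos (by positivity : (0 : ℝ) < 2 * r)]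
    nlinarith
  calc (K : ℝ≥0∞) * m = ∑ k ∈ Finset.range K, m := by simp
    _ ≤ ∑ k ∈ Finset.range K, ν (ball ((2 * r * k) • e) r) :=
      Finset.sum_le_sum fun k hk => hν _ <| by
        rw [norm_smul, he, mul_one, Real.norm_of_nonneg (by positivity)]
        gcongr
        exact (Finset.mem_range.1 hk).le
    _ = ν (⋃ k ∈ Finset.range K, ball ((2 * r * k) • e) r) :=
      (measure_biUnion_finset hdisj fun k _ => measurableSet_ball).symm
    _ ≤ ν (tangentBody r u) :=
      measure_mono (iUnion₂_subset fun k _ => ball_smul_subset_tangentBody hu hue (by positivity))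

end Measure

section Simplex

variable {n : ℕ}

lemma IsSimplex.isBounded {S : Set (EuclideanSpace ℝ (Fin n))} (hS : IsSimplex S) :
    Bornology.IsBounded S := by
  obtain ⟨p, -, rfl⟩ := hS
  exact isBounded_convexHull.2 (finite_range p).isBounded

lemma IsSimplex.exists_tangentBody_subset (hn : 0 < n) {r : ℝ} (hr : 0 ≤ r)
    {S : Set (EuclideanSpace ℝ (Fin n))} (hS : IsSimplex S) (hball : closedBall 0 r ⊆ S) :
    ∃ u : Fin (n + 1) → EuclideanSpace ℝ (Fin n), (∀ i, ‖u i‖ = 1) ∧ tangentBody r u ⊆ S := by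
  obtain ⟨p, hp, rfl⟩ := hS
  have : Nonempty (Fin n) := ⟨⟨0, hn⟩⟩
  let b : AffineBasis (Fin (n + 1)) ℝ (EuclideanSpace ℝ (Fin n)) :=
    ⟨p, hp, hp.affineSpan_eq_top_iff_card_eq_finrank_add_one.2 (by simp)⟩
  exact b.exists_tangentBody_subset_convexHull hr hball

lemma exists_isSimplex_forall_measure_le (hn : 0 < n) {r : ℝ} (hr : 0 < r)
    (μ : Measure (EuclideanSpace ℝ (Fin n))) [IsFiniteMeasure μ] (hμ : μ ≪ volume)
    {S : Set (EuclideanSpace ℝ (Fin n))} (hS : IsSimplex S) (hball : closedBall 0 r ⊆ S)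
    (hdeg : ∀ u : Fin (n + 1) → EuclideanSpace ℝ (Fin n), (∀ i, ‖u i‖ = 1) →
      ¬PositivelySpanning u → μ S < μ (tangentBody r u)) :
    ∃ T, IsSimplex T ∧ closedBall 0 r ⊆ T ∧
      ∀ S', IsSimplex S' → closedBall 0 r ⊆ S' → μ T ≤ μ S' := by
  have : Nonempty (Fin n) := ⟨⟨0, hn⟩⟩
  obtain ⟨a, ha, hmin⟩ := exists_isMinOn_measure_tangentBody (ι := Fin (n + 1)) (r := r) μ
    fun u hu => hμ (measure_hyperplane_eq_zero volume (norm_ne_zero_iff.1 (hu ▸ one_ne_zero)) r)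
  have hle : ∀ S', IsSimplex S' → closedBall 0 r ⊆ S' → μ (tangentBody r a) ≤ μ S' :=
    fun S' hS' hball' => by
      obtain ⟨v, hv, hsub⟩ := hS'.exists_tangentBody_subset hn hr.le hball'
      exact (hmin v hv).trans (measure_mono hsub)
  have hspan : PositivelySpanning a := by_contra fun h => (hdeg a ha h).not_ge (hle S hS hball)
  exact ⟨_, hspan.isSimplex_tangentBody hr, closedBall_subset_tangentBody ha, hle⟩

end Simplex

section RadialDensity

variable {n : ℕ}

lemma lintegral_eq_muRad_univ (ρ : ℝ → ℝ) :
    ∫⁻ x : EuclideanSpace ℝ (Fin n), ENNReal.ofReal (ρ ‖x‖) = muRad n ρ univ := by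
  rw [muRad, withDensity_apply _ MeasurableSet.univ, Measure.restrict_univ]

lemma muRad_add_indicator {ρ : ℝ → ℝ} (hρ : ∀ t, 0 ≤ t → 0 < ρ t) {c : ℝ} (hc : 0 ≤ c) (A : ℝ) :
    muRad n (fun t => ρ t + (Iic A).indicator (fun _ => c) t) =
      muRad n ρ + ENNReal.ofReal c • volume.restrict (closedBall 0 A) := by
  have hdens : (fun x : EuclideanSpace ℝ (Fin n) =>
      ENNReal.ofReal (ρ ‖x‖ + (Iic A).indicator (fun _ => c) ‖x‖)) =
      (fun x => ENNReal.ofReal (ρ ‖x‖)) + (closedBall 0 A).indicator fun _ => ENNReal.ofReal c := by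
    funext x
    by_cases hx : ‖x‖ ≤ A <;>
      simp [indicator, hx, ENNReal.ofReal_add (hρ _ (norm_nonneg x)).le hc]
  rw [muRad, muRad, hdens,
    withDensity_add_right _ (measurable_const.indicator measurableSet_closedBall),
    withDensity_indicator measurableSet_closedBall, withDensity_const]

/-- The ball carrying the extra density `c` holds a row of `K` disjoint `r`-balls, with `K` chosen
so that their total extra mass exceeds the perturbed mass of `S`. -/
lemma exists_perturbed_density {r : ℝ} (hr : 0 < r) {ρ : ℝ → ℝ} (hρ : ∀ t, 0 ≤ t → 0 < ρ t)
    (hanti : AntitoneOn ρ (Ici 0))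
    (hint : ∫⁻ x : EuclideanSpace ℝ (Fin n), ENNReal.ofReal (ρ ‖x‖) ≠ ⊤) {c : ℝ} (hc : 0 < c)
    {S : Set (EuclideanSpace ℝ (Fin n))} (hS : volume S ≠ ⊤) :
    ∃ ρ' : ℝ → ℝ, (∀ t, 0 ≤ t → 0 < ρ' t) ∧ AntitoneOn ρ' (Ici 0) ∧
      (∫⁻ x : EuclideanSpace ℝ (Fin n), ENNReal.ofReal (ρ' ‖x‖)) ≠ ⊤ ∧
      muRad n ρ ≤ muRad n ρ' ∧ muRad n ρ' S ≤ muRad n ρ S + ENNReal.ofReal c * volume S ∧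
      ∀ u : Fin (n + 1) → EuclideanSpace ℝ (Fin n), (∀ i, ‖u i‖ = 1) →
        ¬PositivelySpanning u → muRad n ρ' S < muRad n ρ' (tangentBody r u) := by
  rw [lintegral_eq_muRad_univ] at hint
  obtain ⟨K, hK⟩ := ENNReal.exists_nat_mul_gt
    (b := muRad n ρ univ + ENNReal.ofReal c * volume S)
    (mul_ne_zero (ENNReal.ofReal_pos.2 hc).ne'
      (measure_ball_pos volume (0 : EuclideanSpace ℝ (Fin n)) hr).ne')
    (ENNReal.add_ne_top.2 ⟨hint, ENNReal.mul_ne_top ENNReal.ofReal_ne_top hS⟩)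
  set A := 2 * r * K + r
  set ν := ENNReal.ofReal c • volume.restrict (closedBall (0 : EuclideanSpace ℝ (Fin n)) A)
  have hμ' : muRad n (fun t => ρ t + (Iic A).indicator (fun _ => c) t) = muRad n ρ + ν :=
    muRad_add_indicator hρ hc.le A
  have hνS : ν S ≤ ENNReal.ofReal c * volume S := by
    simp only [ν, Measure.smul_apply, smul_eq_mul]
    gcongr
    exact Measure.restrict_le_self
  have hνball : ∀ x : EuclideanSpace ℝ (Fin n), ‖x‖ ≤ 2 * r * K →
      ENNReal.ofReal c * volume (ball (0 : EuclideanSpace ℝ (Fin n)) r) ≤ ν (ball x r) := by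
    intro x hx
    have hsub : ball x r ⊆ closedBall 0 A := ball_subset_closedBall.trans
      (closedBall_subset_closedBall' (by rw [dist_zero_right]; linarith))
    simp only [ν, Measure.smul_apply, smul_eq_mul, Measure.restrict_apply measurableSet_ball,
      inter_eq_left.2 hsub, Measure.addHaar_ball_center, le_rfl]
  refine ⟨fun t => ρ t + (Iic A).indicator (fun _ => c) t, fun t ht => ?_,
    fun s hs t ht hst => ?_, ?_, ?_, ?_, fun u hu hspan => ?_⟩
  · exact add_pos_of_pos_of_nonneg (hρ t ht) (indicator_nonneg (fun _ _ => hc.le) _)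
  · refine add_le_add (hanti hs ht hst) ?_
    by_cases htA : t ≤ A
    · simp [indicator, htA, hst.trans htA]
    · rw [indicator_of_notMem (by simpa using htA)]
      exact indicator_nonneg (fun _ _ => hc.le) _
  · rw [lintegral_eq_muRad_univ (fun t => ρ t + (Iic A).indicator (fun _ => c) t), hμ',
      Measure.add_apply]
    exact ENNReal.add_ne_top.2 ⟨hint, by
      simpa [ν] using ENNReal.mul_ne_top ENNReal.ofReal_ne_top measure_closedBall_lt_top.ne⟩
  · rw [hμ']
    exact Measure.le_add_right le_rfl
  · rw [hμ', Measure.add_apply]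
    exact add_le_add_right hνS _
  · calc muRad n _ S ≤ muRad n ρ univ + ENNReal.ofReal c * volume S := by
          rw [hμ', Measure.add_apply]
          exact add_le_add (measure_mono (subset_univ S)) hνS
      _ < K * (ENNReal.ofReal c * volume (ball 0 r)) := hK
      _ ≤ ν (tangentBody r u) := nat_mul_le_measure_tangentBody hr hu hspan ν K hνball
      _ ≤ _ := by
          rw [hμ', Measure.add_apply]
          exact le_add_self

end RadialDensity

theorem stmt11_general (n : ℕ) (hn : 2 ≤ n) (r : ℝ) (hr : 0 < r)
    (S₀ : Set (EuclideanSpace ℝ (Fin n)))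
    (H : ∀ ρ : ℝ → ℝ, (∀ t, 0 ≤ t → 0 < ρ t) → AntitoneOn ρ (Set.Ici 0) →
      (∫⁻ x : EuclideanSpace ℝ (Fin n), ENNReal.ofReal (ρ ‖x‖)) ≠ ⊤ →
      ∀ S : Set (EuclideanSpace ℝ (Fin n)), IsSimplex S → Metric.closedBall 0 r ⊆ S →
      (∃ ε > 0, ∀ S' : Set (EuclideanSpace ℝ (Fin n)), IsSimplex S' →
        Metric.closedBall 0 r ⊆ S' → Metric.hausdorffDist S S' < ε →
        muRad n ρ S ≤ muRad n ρ S') →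
      muRad n ρ S₀ ≤ muRad n ρ S) :
    ∀ ρ : ℝ → ℝ, (∀ t, 0 ≤ t → 0 < ρ t) → AntitoneOn ρ (Set.Ici 0) →
      (∫⁻ x : EuclideanSpace ℝ (Fin n), ENNReal.ofReal (ρ ‖x‖)) ≠ ⊤ →
      ∀ S : Set (EuclideanSpace ℝ (Fin n)), IsSimplex S → Metric.closedBall 0 r ⊆ S →
      muRad n ρ S₀ ≤ muRad n ρ S := by
  intro ρ hρ hanti hint S hS hball
  have hSfin : volume S ≠ ⊤ := hS.isBounded.measure_lt_top.ne
  refine le_of_forall_pos_le_add_ofReal_mul hSfin fun c hc => ?_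
  obtain ⟨ρ', hρ', hanti', hint', hle, hS', hdeg⟩ :=
    exists_perturbed_density hr hρ hanti hint hc hSfin
  have : IsFiniteMeasure (muRad n ρ') := isFiniteMeasure_withDensity hint'
  obtain ⟨T, hT, hballT, hTmin⟩ := exists_isSimplex_forall_measure_le (by omega) hr (muRad n ρ')
    (withDensity_absolutelyContinuous _ _) hS hball hdeg
  calc muRad n ρ S₀ ≤ muRad n ρ' S₀ := hle S₀
    _ ≤ muRad n ρ' T :=
      H ρ' hρ' hanti' hint' T hT hballT ⟨1, one_pos, fun S' hS' hball' _ => hTmin S' hS' hball'⟩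
    _ ≤ muRad n ρ' S := hTmin S hS hball
    _ ≤ muRad n ρ S + ENNReal.ofReal c * volume S := hS'

/-- If, for every monotone decreasing positive integrable radial density, every local
minimizer (w.r.t. Hausdorff distance) among simplices containing `B(0,r)` has measure at
least that of the regular outscribed simplex `S₀`, then `S₀` is the global minimizer. -/
theorem stmt11 (n : ℕ) (hn : 2 ≤ n) (r : ℝ) (hr : 0 < r)
    (S₀ : Set (EuclideanSpace ℝ (Fin n))) (hS₀ : IsRegularOutSimplex n r S₀)
    (H : ∀ ρ : ℝ → ℝ, (∀ t, 0 ≤ t → 0 < ρ t) → AntitoneOn ρ (Set.Ici 0) →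
      (∫⁻ x : EuclideanSpace ℝ (Fin n), ENNReal.ofReal (ρ ‖x‖)) ≠ ⊤ →
      ∀ S : Set (EuclideanSpace ℝ (Fin n)), IsSimplex S → Metric.closedBall 0 r ⊆ S →
      (∃ ε > 0, ∀ S' : Set (EuclideanSpace ℝ (Fin n)), IsSimplex S' →
        Metric.closedBall 0 r ⊆ S' → Metric.hausdorffDist S S' < ε →
        muRad n ρ S ≤ muRad n ρ S') →
      muRad n ρ S₀ ≤ muRad n ρ S) :
    ∀ ρ : ℝ → ℝ, (∀ t, 0 ≤ t → 0 < ρ t) → AntitoneOn ρ (Set.Ici 0) →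
      (∫⁻ x : EuclideanSpace ℝ (Fin n), ENNReal.ofReal (ρ ‖x‖)) ≠ ⊤ →
      ∀ S : Set (EuclideanSpace ℝ (Fin n)), IsSimplex S → Metric.closedBall 0 r ⊆ S →
      muRad n ρ S₀ ≤ muRad n ρ S :=
  stmt11_general n hn r hr S₀ H
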